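/- Fix r ∈ ℝ, r ≠ 0, and (x₀, y₀, z₀, p₀, q₀) ∈ ℝ⁵. Define for t ∈ ℝ: x(t) = (q₀/r + x₀/2)cos(rt) + (p₀/r − y₀/2)sin(rt) − (q₀/r − x₀/2); y(t) = (q₀/r + x₀/2)sin(rt) − (p₀/r − y₀/2)cos(rt) + (p₀/r + y₀/2); z(t) = z₀ + (1/(8r²))[ rt((2q₀ + r x₀)² + (−2p₀ + r y₀)²) − 4r(p₀x₀ + q₀y₀)(−1 + cos(rt)) + (−4p₀² − 4q₀² + r²(x₀² + y₀²)) sin(rt) ]; p(t) = −(r/2)(y(t) − y₀) + p₀; q(t) = (r/2)(x(t) − x₀) + q₀. Then (x, y, z, p, q) satisfies x(0) = x₀, y(0) = y₀, z(0) = z₀, p(0) = p₀, q(0) = q₀ and solves the system ẋ = p − r y/2, ẏ = q + r x/2, ż = r(x² + y²)/4 + q x/2 − p y/2, ṗ = −(r/2)(q + r x/2), q̇ = (r/2)(p − r y/2). Moreover, if x₀ = y₀ = z₀ = 0 then z(t) = ((p₀² + q₀²)/2)·(rt − sin(rt))/r² for all t. -/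
import Mathlib


/-- `x`-component of the Hamiltonian flow on the Heisenberg group. -/
noncomputable def xH (r x₀ y₀ p₀ q₀ t : ℝ) : ℝ :=
  (q₀ / r + x₀ / 2) * Real.cos (r * t) + (p₀ / r - y₀ / 2) * Real.sin (r * t)
    - (q₀ / r - x₀ / 2)

/-- `y`-component of the Hamiltonian flow on the Heisenberg group. -/
noncomputable def yH (r x₀ y₀ p₀ q₀ t : ℝ) : ℝ :=
  (q₀ / r + x₀ / 2) * Real.sin (r * t) - (p₀ / r - y₀ / 2) * Real.cos (r * t)
    + (p₀ / r + y₀ / 2)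

/-- `z`-component of the Hamiltonian flow on the Heisenberg group. -/
noncomputable def zH (r x₀ y₀ z₀ p₀ q₀ t : ℝ) : ℝ :=
  z₀ + (1 / (8 * r ^ 2)) *
    (r * t * ((2 * q₀ + r * x₀) ^ 2 + (-2 * p₀ + r * y₀) ^ 2)
      - 4 * r * (p₀ * x₀ + q₀ * y₀) * (-1 + Real.cos (r * t))
      + (-4 * p₀ ^ 2 - 4 * q₀ ^ 2 + r ^ 2 * (x₀ ^ 2 + y₀ ^ 2)) * Real.sin (r * t))

/-- `p`-component of the Hamiltonian flow on the Heisenberg group. -/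
noncomputable def pH (r x₀ y₀ p₀ q₀ t : ℝ) : ℝ :=
  -(r / 2) * (yH r x₀ y₀ p₀ q₀ t - y₀) + p₀

/-- `q`-component of the Hamiltonian flow on the Heisenberg group. -/
noncomputable def qH (r x₀ y₀ p₀ q₀ t : ℝ) : ℝ :=
  (r / 2) * (xH r x₀ y₀ p₀ q₀ t - x₀) + q₀

/-- The explicit formulas solve the Hamiltonian ODEs for Brownian motion on the
Heisenberg group with the given initial data, and when started at the origin the
area component satisfies `z(t) = ((p₀²+q₀²)/2)(rt − sin(rt))/r²`. -/
theorem stmt_12 (r x₀ y₀ z₀ p₀ q₀ : ℝ) (hr : r ≠ 0) :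
    xH r x₀ y₀ p₀ q₀ 0 = x₀ ∧ yH r x₀ y₀ p₀ q₀ 0 = y₀ ∧ zH r x₀ y₀ z₀ p₀ q₀ 0 = z₀ ∧
    pH r x₀ y₀ p₀ q₀ 0 = p₀ ∧ qH r x₀ y₀ p₀ q₀ 0 = q₀ ∧
    (∀ t, HasDerivAt (xH r x₀ y₀ p₀ q₀)
      (pH r x₀ y₀ p₀ q₀ t - r * yH r x₀ y₀ p₀ q₀ t / 2) t) ∧
    (∀ t, HasDerivAt (yH r x₀ y₀ p₀ q₀)
      (qH r x₀ y₀ p₀ q₀ t + r * xH r x₀ y₀ p₀ q₀ t / 2) t) ∧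
    (∀ t, HasDerivAt (zH r x₀ y₀ z₀ p₀ q₀)
      (r * ((xH r x₀ y₀ p₀ q₀ t) ^ 2 + (yH r x₀ y₀ p₀ q₀ t) ^ 2) / 4
        + qH r x₀ y₀ p₀ q₀ t * xH r x₀ y₀ p₀ q₀ t / 2
        - pH r x₀ y₀ p₀ q₀ t * yH r x₀ y₀ p₀ q₀ t / 2) t) ∧
    (∀ t, HasDerivAt (pH r x₀ y₀ p₀ q₀)
      (-(r / 2) * (qH r x₀ y₀ p₀ q₀ t + r * xH r x₀ y₀ p₀ q₀ t / 2)) t) ∧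
    (∀ t, HasDerivAt (qH r x₀ y₀ p₀ q₀)
      ((r / 2) * (pH r x₀ y₀ p₀ q₀ t - r * yH r x₀ y₀ p₀ q₀ t / 2)) t) ∧
    (x₀ = 0 → y₀ = 0 → z₀ = 0 → ∀ t,
      zH r x₀ y₀ z₀ p₀ q₀ t
        = ((p₀ ^ 2 + q₀ ^ 2) / 2) * (r * t - Real.sin (r * t)) / r ^ 2) := by

  have hrt : ∀ t : ℝ, HasDerivAt (fun t : ℝ => r * t) r t := fun t => by
    simpa using (hasDerivAt_id t).const_mul r
  have hc : ∀ t : ℝ, HasDerivAt (fun t : ℝ => Real.cos (r * t)) (-Real.sin (r * t) * r) t :=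
    fun t => (Real.hasDerivAt_cos (r * t)).comp t (hrt t)
  have hs : ∀ t : ℝ, HasDerivAt (fun t : ℝ => Real.sin (r * t)) (Real.cos (r * t) * r) t :=
    fun t => (Real.hasDerivAt_sin (r * t)).comp t (hrt t)
  have hx : ∀ t, HasDerivAt (xH r x₀ y₀ p₀ q₀)
      (pH r x₀ y₀ p₀ q₀ t - r * yH r x₀ y₀ p₀ q₀ t / 2) t := by
    intro t
    have h : HasDerivAt (xH r x₀ y₀ p₀ q₀)
        ((q₀ / r + x₀ / 2) * (-Real.sin (r * t) * r)
          + (p₀ / r - y₀ / 2) * (Real.cos (r * t) * r)) t := by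
      unfold xH
      exact ((((hc t).const_mul _).add ((hs t).const_mul _)).sub_const _)
    convert h using 1
    unfold pH yH
    field_simp
    ring
  have hy : ∀ t, HasDerivAt (yH r x₀ y₀ p₀ q₀)
      (qH r x₀ y₀ p₀ q₀ t + r * xH r x₀ y₀ p₀ q₀ t / 2) t := by
    intro t
    have h : HasDerivAt (yH r x₀ y₀ p₀ q₀)
        ((q₀ / r + x₀ / 2) * (Real.cos (r * t) * r)
          - (p₀ / r - y₀ / 2) * (-Real.sin (r * t) * r)) t := by
      unfold yH
      exact ((((hs t).const_mul _).sub ((hc t).const_mul _)).add_const _)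
    convert h using 1
    unfold qH xH
    field_simp
    ring
  have hz : ∀ t, HasDerivAt (zH r x₀ y₀ z₀ p₀ q₀)
      (r * ((xH r x₀ y₀ p₀ q₀ t) ^ 2 + (yH r x₀ y₀ p₀ q₀ t) ^ 2) / 4
        + qH r x₀ y₀ p₀ q₀ t * xH r x₀ y₀ p₀ q₀ t / 2
        - pH r x₀ y₀ p₀ q₀ t * yH r x₀ y₀ p₀ q₀ t / 2) t := by
    intro t
    have h : HasDerivAt (zH r x₀ y₀ z₀ p₀ q₀)
        ((1 / (8 * r ^ 2)) *
          (r * ((2 * q₀ + r * x₀) ^ 2 + (-2 * p₀ + r * y₀) ^ 2)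
            - 4 * r * (p₀ * x₀ + q₀ * y₀) * (-Real.sin (r * t) * r)
            + (-4 * p₀ ^ 2 - 4 * q₀ ^ 2 + r ^ 2 * (x₀ ^ 2 + y₀ ^ 2))
              * (Real.cos (r * t) * r))) t := by
      unfold zH
      refine HasDerivAt.const_add _ (HasDerivAt.const_mul _ ?_)
      have h1 : HasDerivAt (fun t : ℝ =>
          r * t * ((2 * q₀ + r * x₀) ^ 2 + (-2 * p₀ + r * y₀) ^ 2))
          (r * ((2 * q₀ + r * x₀) ^ 2 + (-2 * p₀ + r * y₀) ^ 2)) t :=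
        (hrt t).mul_const _
      have h2 : HasDerivAt (fun t : ℝ =>
          4 * r * (p₀ * x₀ + q₀ * y₀) * (-1 + Real.cos (r * t)))
          (4 * r * (p₀ * x₀ + q₀ * y₀) * (-Real.sin (r * t) * r)) t :=
        ((hc t).const_add (-1)).const_mul _
      have h3 : HasDerivAt (fun t : ℝ =>
          (-4 * p₀ ^ 2 - 4 * q₀ ^ 2 + r ^ 2 * (x₀ ^ 2 + y₀ ^ 2)) * Real.sin (r * t))
          ((-4 * p₀ ^ 2 - 4 * q₀ ^ 2 + r ^ 2 * (x₀ ^ 2 + y₀ ^ 2))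
            * (Real.cos (r * t) * r)) t :=
        (hs t).const_mul _
      exact (h1.sub h2).add h3
    convert h using 1
    unfold pH qH xH yH
    have hsc := Real.sin_sq_add_cos_sq (r * t)
    have h8 : (8 : ℝ) * r ^ 2 ≠ 0 := by positivity
    rw [eq_comm, one_div, inv_mul_eq_iff_eq_mul₀ h8]
    set A := q₀ / r with hA
    set B := p₀ / r with hB
    have hq : q₀ = r * A := by rw [hA]; field_simp
    have hp : p₀ = r * B := by rw [hB]; field_simp
    rw [hq, hp]
    linear_combination (-4 * r ^ 3 * ((A + x₀ / 2) ^ 2 + (B - y₀ / 2) ^ 2)) * hsc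
  have hx0 : xH r x₀ y₀ p₀ q₀ 0 = x₀ := by unfold xH; simp
  have hy0 : yH r x₀ y₀ p₀ q₀ 0 = y₀ := by unfold yH; simp; ring
  refine ⟨hx0, hy0, ?_, ?_, ?_, hx, hy, hz, ?_, ?_, ?_⟩
  · unfold zH; simp
  · unfold pH; rw [hy0]; ring
  · unfold qH; rw [hx0]; ring
  · intro t
    have h : HasDerivAt (pH r x₀ y₀ p₀ q₀)
        (-(r / 2) * (qH r x₀ y₀ p₀ q₀ t + r * xH r x₀ y₀ p₀ q₀ t / 2)) t := by
      exact (((hy t).sub_const y₀).const_mul (-(r / 2))).add_const p₀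
    exact h
  · intro t
    have h : HasDerivAt (qH r x₀ y₀ p₀ q₀)
        ((r / 2) * (pH r x₀ y₀ p₀ q₀ t - r * yH r x₀ y₀ p₀ q₀ t / 2)) t := by
      exact (((hx t).sub_const x₀).const_mul (r / 2)).add_const q₀
    exact h
  · rintro rfl rfl rfl t
    unfold zH
    field_simp
    ring
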